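/- Let X be a real infinite-dimensional Banach space with a Schauder basis (x_n)_{n=1}^∞ with basis constant K and coordinate functionals (x*_n). Then sh((x*_n)) ≤ bc₂((x_n)) ≤ 2K²·sh((x*_n)), where sh((x*_n)) is computed for the basic sequence (x*_n) inside its closed linear span V. -/

import Mathlib

open Filter Metric NormedSpace Set Topology

noncomputable section

variable {E : Type*} [NormedAddCommGroup E] [NormedSpace ℝ E]

/-- `f` is the sequence of coordinate functionals of the Schauder basis `x`:
every vector has an expansion along `x`, and such expansions are unique. -/
structure IsSchauderBasis (x : ℕ → E) (f : ℕ → E →L[ℝ] ℝ) : Prop where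
  expand : ∀ v : E,
    Tendsto (fun n => ∑ i ∈ Finset.range n, f i v • x i) atTop (𝓝 v)
  unique : ∀ (a : ℕ → ℝ) (v : E),
    Tendsto (fun n => ∑ i ∈ Finset.range n, a i • x i) atTop (𝓝 v) → ∀ i, a i = f i v

/-- the `n`-th basis projection `P_n`. -/
def basisProj (x : ℕ → E) (f : ℕ → E →L[ℝ] ℝ) (n : ℕ) : E →L[ℝ] E :=
  ∑ i ∈ Finset.range n, (f i).smulRight (x i)

/-- closed linear span of `{y i : i ≥ n}`. -/
def tailSpan (y : ℕ → E) (n : ℕ) : Submodule ℝ E :=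
  (Submodule.span ℝ (y '' {i | n ≤ i})).topologicalClosure

/-- `‖g‖_n` : the norm of the restriction of `g` to the closed span of the tail of `y`. -/
def tailNorm (y : ℕ → E) (g : E →L[ℝ] ℝ) (n : ℕ) : ℝ :=
  ‖g.comp (tailSpan y n).subtypeL‖

/-- the quantity `sh` measuring how far a basic sequence is from being shrinking. -/
def sh (y : ℕ → E) : ℝ :=
  sSup ((fun g : E →L[ℝ] ℝ => limsup (tailNorm y g) atTop) '' {g | ‖g‖ ≤ 1})

/-- non-symmetrised Hausdorff distance `d̂(A,B)`. -/
def hdist (A B : Set E) : ℝ := sSup ((fun a => infDist a B) '' A)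

/-- ordinary distance between two sets. -/
def setDist (A B : Set E) : ℝ := sInf {d : ℝ | ∃ a ∈ A, ∃ b ∈ B, d = dist a b}

/-- `ca` measures how far a sequence is from being norm-Cauchy. -/
def ca (z : ℕ → E) : ℝ :=
  ⨅ n : ℕ, sSup {d : ℝ | ∃ k, n ≤ k ∧ ∃ l, n ≤ l ∧ d = ‖z k - z l‖}

/-- measure of non-separability. -/
def sep (A : Set E) : ℝ :=
  sInf {ε : ℝ | 0 < ε ∧ ∃ C : Set E, C.Countable ∧ ∀ a ∈ A, ∃ c ∈ C, ‖a - c‖ ≤ ε}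

/-- `V`: the closed linear span of the coordinate functionals. -/
def dualSpan (g : ℕ → E →L[ℝ] ℝ) : Submodule ℝ (StrongDual ℝ E) :=
  (Submodule.span ℝ (Set.range g)).topologicalClosure

lemma mem_dualSpan (g : ℕ → E →L[ℝ] ℝ) (i : ℕ) : g i ∈ dualSpan g :=
  Submodule.le_topologicalClosure _ (Submodule.subset_span ⟨i, rfl⟩)

/-- the quantity `bc₁` measuring non-bounded-completeness. -/
def bc1 (y : ℕ → E) : ℝ :=
  sSup {c : ℝ | ∃ a : ℕ → ℝ,
    (∀ n, ‖∑ i ∈ Finset.range n, a i • y i‖ ≤ 1) ∧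
    c = ca (fun n => ∑ i ∈ Finset.range n, a i • y i)}

/-- the quantity `bc₂`. -/
def bc2 (y : ℕ → E) (g : ℕ → E →L[ℝ] ℝ) : ℝ :=
  sSup {c : ℝ | ∃ φ : ↥(dualSpan g) →L[ℝ] ℝ,
    @norm _ (ContinuousLinearMap.hasOpNorm (E := ↥(dualSpan g)) (σ₁₂ := RingHom.id ℝ)) φ ≤ 1 ∧
    c = ca (fun n => ∑ i ∈ Finset.range n, φ ⟨g i, mem_dualSpan g i⟩ • y i)}

/-- the quantity `bc₃`. -/
def bc3 (y : ℕ → E) (g : ℕ → E →L[ℝ] ℝ) : ℝ :=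
  sSup {c : ℝ | ∃ Φ : StrongDual ℝ (StrongDual ℝ E), ‖Φ‖ ≤ 1 ∧
    c = ca (fun n => ∑ i ∈ Finset.range n, Φ (g i) • y i)}

/-- `α_Y(X)`: measures how well `Y` embeds isomorphically into `X`. -/
def alpha (Y X : Type*) [NormedAddCommGroup Y] [NormedSpace ℝ Y]
    [NormedAddCommGroup X] [NormedSpace ℝ X] : ℝ :=
  sSup {c : ℝ | ∃ T : Y →L[ℝ] X, ‖T‖ ≤ 1 ∧ ∀ y : Y, c * ‖y‖ ≤ ‖T y‖}

/-- `β_Y(X)`: measures how well `Y` embeds complementably into `X`. -/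
def beta (Y X : Type*) [NormedAddCommGroup Y] [NormedSpace ℝ Y]
    [NormedAddCommGroup X] [NormedSpace ℝ X] : ℝ :=
  sSup {c : ℝ | ∃ (A : X →L[ℝ] Y) (B : Y →L[ℝ] X),
    A.comp B = ContinuousLinearMap.id ℝ Y ∧ c * (‖A‖ * ‖B‖) ≤ 1}

/-- weak-star closure of a subset of the bidual. -/
def wstarClosure {X : Type*} [NormedAddCommGroup X] [NormedSpace ℝ X]
    (S : Set (StrongDual ℝ (StrongDual ℝ X))) : Set (StrongDual ℝ (StrongDual ℝ X)) :=
  {z | StrongDual.toWeakDual z ∈ closure (StrongDual.toWeakDual '' S)}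

/-- the measure of weak non-compactness `wk_X(A)`. -/
def wk (X : Type*) [NormedAddCommGroup X] [NormedSpace ℝ X] (A : Set X) : ℝ :=
  hdist (wstarClosure ((inclusionInDoubleDual ℝ X) '' A))
    (Set.range (inclusionInDoubleDual ℝ X))

/-- weak-star cluster points in the bidual of a sequence in `X`. -/
def wclust {X : Type*} [NormedAddCommGroup X] [NormedSpace ℝ X] (u : ℕ → X) :
    Set (StrongDual ℝ (StrongDual ℝ X)) :=
  {z | MapClusterPt (StrongDual.toWeakDual z) atTop
      (fun n => StrongDual.toWeakDual (inclusionInDoubleDual ℝ X (u n)))}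

/-- the measure of weak non-compactness `wck_X(A)`. -/
def wck (X : Type*) [NormedAddCommGroup X] [NormedSpace ℝ X] (A : Set X) : ℝ :=
  sSup {c : ℝ | ∃ u : ℕ → X, (∀ n, u n ∈ A) ∧
    c = setDist (wclust u) (Set.range (inclusionInDoubleDual ℝ X))}


/-- the canonical map `j : X → V*` for a subspace `V` of the dual,
`⟨j v, x*⟩ = x*(v)`. -/
def jfun {X : Type*} [NormedAddCommGroup X] [NormedSpace ℝ X]
    (V : Submodule ℝ (StrongDual ℝ X)) (v : X) : ↥V →L[ℝ] ℝ :=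
  (inclusionInDoubleDual ℝ X v).comp V.subtypeL

/-- the space `ℓ₁` of absolutely summable real sequences. -/
abbrev ell1 : Type := lp (fun _ : ℕ => ℝ) 1

/-- the space `c₀` of real sequences converging to zero, with the sup norm. -/
abbrev czero : Type := ZeroAtInftyContinuousMap ℕ ℝ

end

/-!
For `φ ∈ V*` write `S_n φ = ∑_{i<n} φ(x*_i) x_i`. For `ξ ∈ X*` one has
`ξ (S_k φ - S_l φ) = φ (∑_{l ≤ i < k} ξ(x_i) x*_i)`, and `∑_{l ≤ i < k} ξ(x_i) x*_i`, which is
`ξ ∘ (P_k - P_l)`, lies in the closed span of `{x*_i : i ≥ l}` and has norm at most `2K‖ξ‖`.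
Hence `‖S_k φ - S_l φ‖` is at most `2K` times the norm of `φ` on that tail span, which bounds
`ca((S_n φ))` by `2K · limsup` of these tail norms; `2K ≤ 2K²` because `K ≥ 1`.

Conversely, every `w` in the span of `{x*_i : i ≥ n}` equals `∑_{n ≤ i < m} w(x_i) x*_i` for large
`m`, so `φ w = w (S_m φ - S_n φ)`. By density the norm of `φ` on the tail span is at most
`sup_{m ≥ n} ‖S_m φ - S_n φ‖`, and letting `n → ∞` gives the lower bound by `ca((S_n φ))`.
-/

section Ca

variable {E : Type*} [NormedAddCommGroup E]

lemma ca_le_of_forall_norm_sub_le (z : ℕ → E) (n : ℕ) {C : ℝ}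
    (h : ∀ k, n ≤ k → ∀ l, n ≤ l → ‖z k - z l‖ ≤ C) : ca z ≤ C := by
  refine (ciInf_le ⟨0, ?_⟩ n).trans (csSup_le ⟨_, n, le_rfl, n, le_rfl, rfl⟩ ?_)
  · rintro _ ⟨m, rfl⟩
    exact Real.sSup_nonneg fun _ ⟨_, _, _, _, hd⟩ => hd ▸ norm_nonneg _
  · rintro _ ⟨k, hk, l, hl, rfl⟩
    exact h k hk l hl

lemma le_ca_of_forall {z : ℕ → E} {B c : ℝ} (hB : ∀ n, ‖z n‖ ≤ B)
    (h : ∀ n C, (∀ m, n ≤ m → ‖z m - z n‖ ≤ C) → c ≤ C) : c ≤ ca z := by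
  refine le_ciInf fun n => h n _ fun m hm => le_csSup ⟨B + B, ?_⟩ ⟨m, hm, n, le_rfl, rfl⟩
  rintro _ ⟨k, -, l, -, rfl⟩
  exact (norm_sub_le _ _).trans (add_le_add (hB k) (hB l))

end Ca

section TailNorm

variable {E : Type*} [NormedAddCommGroup E] [NormedSpace ℝ E]

lemma ContinuousLinearMap.norm_comp_subtypeL_topologicalClosure_le (p : Submodule ℝ E)
    (g : E →L[ℝ] ℝ) {C : ℝ} (hC : 0 ≤ C) (h : ∀ w ∈ p, ‖g w‖ ≤ C * ‖w‖) :
    ‖g.comp p.topologicalClosure.subtypeL‖ ≤ C := by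
  refine g.comp _ |>.opNorm_le_bound hC fun ⟨w, hw⟩ => ?_
  have hclosed : IsClosed {u : E | ‖g u‖ ≤ C * ‖u‖} :=
    isClosed_le g.continuous.norm (continuous_const.mul continuous_norm)
  exact closure_minimal h hclosed (p.topologicalClosure_coe ▸ hw)

variable (y : ℕ → E) (g : E →L[ℝ] ℝ)

lemma tailNorm_nonneg (n : ℕ) : 0 ≤ tailNorm y g n :=
  norm_nonneg (g.comp (tailSpan y n).subtypeL)

lemma tailNorm_le_norm (n : ℕ) : tailNorm y g n ≤ ‖g‖ :=
  ContinuousLinearMap.opNorm_le_bound _ (norm_nonneg g) fun v => g.le_opNorm v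

lemma norm_apply_le_tailNorm_mul {n : ℕ} {v : E} (hv : v ∈ tailSpan y n) :
    ‖g v‖ ≤ tailNorm y g n * ‖v‖ :=
  (g.comp (tailSpan y n).subtypeL).le_opNorm ⟨v, hv⟩

lemma tailNorm_antitone : Antitone (tailNorm y g) := by
  intro m n hmn
  have hsub : tailSpan y n ≤ tailSpan y m :=
    Submodule.topologicalClosure_mono
      (Submodule.span_mono (Set.image_mono fun i hi => hmn.trans hi))
  exact ContinuousLinearMap.opNorm_le_bound _ (tailNorm_nonneg y g m)
    fun v => norm_apply_le_tailNorm_mul y g (hsub v.2)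

lemma limsup_tailNorm_eq_iInf : limsup (tailNorm y g) atTop = ⨅ n, tailNorm y g n :=
  (tendsto_atTop_ciInf (tailNorm_antitone y g)
    ⟨0, by rintro _ ⟨n, rfl⟩; exact tailNorm_nonneg y g n⟩).limsup_eq

lemma limsup_tailNorm_le (n : ℕ) : limsup (tailNorm y g) atTop ≤ tailNorm y g n :=
  limsup_tailNorm_eq_iInf y g ▸
    ciInf_le ⟨0, by rintro _ ⟨m, rfl⟩; exact tailNorm_nonneg y g m⟩ n

lemma limsup_tailNorm_nonneg : 0 ≤ limsup (tailNorm y g) atTop :=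
  limsup_tailNorm_eq_iInf y g ▸ le_ciInf (tailNorm_nonneg y g)

lemma limsup_tailNorm_le_sh (hg : ‖g‖ ≤ 1) : limsup (tailNorm y g) atTop ≤ sh y := by
  refine le_csSup ⟨1, ?_⟩ ⟨g, hg, rfl⟩
  rintro _ ⟨g', hg', rfl⟩
  exact (limsup_tailNorm_le y g' 0).trans ((tailNorm_le_norm y g' 0).trans hg')

lemma sh_le {c : ℝ} (h : ∀ g : E →L[ℝ] ℝ, ‖g‖ ≤ 1 → limsup (tailNorm y g) atTop ≤ c) :
    sh y ≤ c :=
  csSup_le (Set.Nonempty.image _ ⟨0, by simp⟩) fun _ ⟨g, hg, hc⟩ => hc ▸ h g hg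

end TailNorm

section SchauderBasis

variable {X : Type*} [NormedAddCommGroup X] [NormedSpace ℝ X]

lemma basisProj_apply (x : ℕ → X) (f : ℕ → X →L[ℝ] ℝ) (n : ℕ) (v : X) :
    basisProj x f n v = ∑ i ∈ Finset.range n, f i v • x i := by
  simp [basisProj]

variable {x : ℕ → X} {f : ℕ → X →L[ℝ] ℝ}

namespace IsSchauderBasis

lemma apply_basis (hb : IsSchauderBasis x f) (i j : ℕ) :
    f i (x j) = if i = j then 1 else 0 := by
  refine (hb.unique (fun i => if i = j then 1 else 0) (x j) ?_ i).symm
  refine tendsto_const_nhds.congr' ?_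
  filter_upwards [eventually_gt_atTop j] with n hn
  simp [Finset.sum_ite_eq', hn]

lemma tendsto_basisProj (hb : IsSchauderBasis x f) (v : X) :
    Tendsto (fun n => basisProj x f n v) atTop (𝓝 v) := by
  simpa only [basisProj_apply] using hb.expand v

lemma bddAbove_norm_basisProj [CompleteSpace X] (hb : IsSchauderBasis x f) :
    BddAbove (range fun n => ‖basisProj x f n‖) := by
  obtain ⟨C, hC⟩ := banach_steinhaus fun v =>
    let ⟨C, hC⟩ := (hb.tendsto_basisProj v).norm.bddAbove_range
    ⟨C, fun n => hC ⟨n, rfl⟩⟩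
  exact ⟨C, by rintro _ ⟨n, rfl⟩; exact hC n⟩

lemma one_le_of_norm_basisProj_le [Nontrivial X] (hb : IsSchauderBasis x f) {K : ℝ}
    (hK : ∀ n, ‖basisProj x f n‖ ≤ K) : 1 ≤ K := by
  obtain ⟨v, hv⟩ := exists_ne (0 : X)
  have hle : ‖v‖ ≤ K * ‖v‖ :=
    le_of_tendsto (hb.tendsto_basisProj v).norm (Eventually.of_forall fun n =>
      ((basisProj x f n).le_opNorm v).trans (mul_le_mul_of_nonneg_right (hK n) (norm_nonneg v)))
  nlinarith [norm_pos_iff.mpr hv]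

end IsSchauderBasis

end SchauderBasis

lemma ContinuousLinearMap.apply_sum_smul_comm {E F : Type*} [NormedAddCommGroup E]
    [NormedSpace ℝ E] [NormedAddCommGroup F] [NormedSpace ℝ F] (ξ : E →L[ℝ] ℝ)
    (φ : F →L[ℝ] ℝ) (u : ℕ → E) (v : ℕ → F) (s : Finset ℕ) :
    ξ (∑ i ∈ s, φ (v i) • u i) = φ (∑ i ∈ s, ξ (u i) • v i) := by
  simp only [map_sum, map_smul, smul_eq_mul, mul_comm]

-- `E →L[ℝ] ℝ` with the topology of `E` taken from its norm. For a subspace `E` of a dual space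
-- the subspace topology is not reducibly the norm topology, and instance search then misses
-- the operator norm on `E →L[ℝ] ℝ`.
abbrev NormedDual (E : Type*) [NormedAddCommGroup E] [NormedSpace ℝ E] : Type _ := E →L[ℝ] ℝ

section DualExpansion

variable {X : Type*} [NormedAddCommGroup X] [NormedSpace ℝ X] (x : ℕ → X) (f : ℕ → X →L[ℝ] ℝ)

def dualCoord (i : ℕ) : dualSpan f := ⟨f i, mem_dualSpan f i⟩

noncomputable def dualExpansion (φ : NormedDual (dualSpan f)) (n : ℕ) : X :=
  ∑ i ∈ Finset.range n, φ (dualCoord f i) • x i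

variable {x f}

@[simp]
lemma dualExpansion_zero (φ : NormedDual (dualSpan f)) : dualExpansion x f φ 0 = 0 := by
  simp [dualExpansion]

lemma sum_Ico_smul_dualCoord_mem_tailSpan (ξ : StrongDual ℝ X) {n l : ℕ} (hnl : n ≤ l)
    (k : ℕ) : ∑ i ∈ Finset.Ico l k, ξ (x i) • dualCoord f i ∈ tailSpan (dualCoord f) n :=
  Submodule.sum_mem _ fun i hi => Submodule.smul_mem _ _ <|
    Submodule.le_topologicalClosure _
      (Submodule.subset_span ⟨i, hnl.trans (Finset.mem_Ico.mp hi).1, rfl⟩)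

lemma coe_sum_Ico_smul_dualCoord (ξ : StrongDual ℝ X) {l k : ℕ} (hlk : l ≤ k) :
    ((∑ i ∈ Finset.Ico l k, ξ (x i) • dualCoord f i : dualSpan f) : StrongDual ℝ X)
      = ξ.comp (basisProj x f k - basisProj x f l) := by
  ext v
  simp [dualCoord, basisProj_apply, Finset.sum_Ico_eq_sub _ hlk, mul_comm]

lemma norm_dualExpansion_sub_le {K : ℝ} (hK : ∀ n, ‖basisProj x f n‖ ≤ K)
    (φ : NormedDual (dualSpan f)) {n l k : ℕ} (hnl : n ≤ l) (hlk : l ≤ k) :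
    ‖dualExpansion x f φ k - dualExpansion x f φ l‖ ≤ 2 * K * tailNorm (dualCoord f) φ n := by
  have hK0 : 0 ≤ K := (norm_nonneg _).trans (hK 0)
  refine norm_le_dual_bound ℝ _ (by have := tailNorm_nonneg (dualCoord f) φ n; positivity)
    fun ξ => ?_
  set w := ∑ i ∈ Finset.Ico l k, ξ (x i) • dualCoord f i
  have hw : ‖w‖ ≤ 2 * K * ‖ξ‖ := calc
    ‖w‖ = ‖ξ.comp (basisProj x f k - basisProj x f l)‖ := by
      rw [← coe_sum_Ico_smul_dualCoord ξ hlk]; rfl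
    _ ≤ ‖ξ‖ * ‖basisProj x f k - basisProj x f l‖ := ξ.opNorm_comp_le _
    _ ≤ ‖ξ‖ * (K + K) := mul_le_mul_of_nonneg_left
      ((norm_sub_le _ _).trans (add_le_add (hK k) (hK l))) (norm_nonneg ξ)
    _ = 2 * K * ‖ξ‖ := by ring
  have hξ : ξ (dualExpansion x f φ k - dualExpansion x f φ l) = φ w := by
    rw [dualExpansion, dualExpansion, ← Finset.sum_Ico_eq_sub _ hlk]
    exact ξ.apply_sum_smul_comm φ x (dualCoord f) _
  calc ‖ξ (dualExpansion x f φ k - dualExpansion x f φ l)‖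
      ≤ tailNorm (dualCoord f) φ n * ‖w‖ :=
        hξ ▸ norm_apply_le_tailNorm_mul _ φ (sum_Ico_smul_dualCoord_mem_tailSpan ξ hnl k)
    _ ≤ tailNorm (dualCoord f) φ n * (2 * K * ‖ξ‖) :=
        mul_le_mul_of_nonneg_left hw (tailNorm_nonneg (dualCoord f) φ n)
    _ = 2 * K * tailNorm (dualCoord f) φ n * ‖ξ‖ := by ring

lemma eventually_sum_Ico_smul_dualCoord_eq (hbi : ∀ i j, f i (x j) = if i = j then 1 else 0)
    {n : ℕ} {w : dualSpan f} (hw : w ∈ Submodule.span ℝ (dualCoord f '' {i | n ≤ i})) :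
    ∀ᶠ m in atTop, ∑ i ∈ Finset.Ico n m, (w : StrongDual ℝ X) (x i) • dualCoord f i = w := by
  induction hw using Submodule.span_induction with
  | mem w hw =>
    obtain ⟨j, hj : n ≤ j, rfl⟩ := hw
    filter_upwards [eventually_gt_atTop j] with m hm
    simp [dualCoord, hbi, ite_smul, Finset.sum_ite_eq, hm, hj.not_gt]
  | zero => simp
  | add u v _ _ hu hv =>
    filter_upwards [hu, hv] with m hu hv
    simp only [Submodule.coe_add, add_apply, add_smul, Finset.sum_add_distrib, hu, hv]
  | smul a u _ hu =>
    filter_upwards [hu] with m hu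
    simp only [Submodule.coe_smul, smul_apply, smul_eq_mul, mul_smul, ← Finset.smul_sum, hu]

lemma tailNorm_le_of_norm_dualExpansion_sub_le
    (hbi : ∀ i j, f i (x j) = if i = j then 1 else 0) (φ : NormedDual (dualSpan f)) {n : ℕ} {C : ℝ}
    (hC : ∀ m, n ≤ m → ‖dualExpansion x f φ m - dualExpansion x f φ n‖ ≤ C) :
    tailNorm (dualCoord f) φ n ≤ C := by
  have hC0 : 0 ≤ C := (norm_nonneg _).trans (hC n le_rfl)
  apply ContinuousLinearMap.norm_comp_subtypeL_topologicalClosure_le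
    (Submodule.span ℝ (dualCoord f '' {i | n ≤ i})) φ hC0
  intro w hw
  obtain ⟨m, hwm, hnm⟩ :=
    ((eventually_sum_Ico_smul_dualCoord_eq hbi hw).and (eventually_ge_atTop n)).exists
  have hφw : φ w = (w : StrongDual ℝ X) (dualExpansion x f φ m - dualExpansion x f φ n) := by
    rw [dualExpansion, dualExpansion, ← Finset.sum_Ico_eq_sub _ hnm]
    conv_lhs => rw [← hwm]
    exact ((w : StrongDual ℝ X).apply_sum_smul_comm φ x (dualCoord f) _).symm
  calc ‖φ w‖ ≤ ‖(w : StrongDual ℝ X)‖ * C :=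
        hφw ▸ (ContinuousLinearMap.le_opNorm _ _).trans
          (mul_le_mul_of_nonneg_left (hC m hnm) (norm_nonneg _))
    _ = C * ‖w‖ := mul_comm _ _

end DualExpansion

section Bc2

variable {X : Type*} [NormedAddCommGroup X] [NormedSpace ℝ X] {x : ℕ → X}
  {f : ℕ → X →L[ℝ] ℝ} {K : ℝ}

lemma ca_dualExpansion_le (hK : ∀ n, ‖basisProj x f n‖ ≤ K) (φ : NormedDual (dualSpan f)) :
    ca (dualExpansion x f φ) ≤ 2 * K * limsup (tailNorm (dualCoord f) φ) atTop := by
  have hK0 : 0 ≤ 2 * K := by linarith [(norm_nonneg _).trans (hK 0)]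
  rw [limsup_tailNorm_eq_iInf, Real.mul_iInf_of_nonneg hK0]
  refine le_ciInf fun n => ca_le_of_forall_norm_sub_le _ n fun k hk l hl => ?_
  rcases le_total l k with hlk | hkl
  · exact norm_dualExpansion_sub_le hK φ hl hlk
  · exact norm_sub_rev (dualExpansion x f φ k) _ ▸ norm_dualExpansion_sub_le hK φ hk hkl

lemma limsup_tailNorm_le_ca (hbi : ∀ i j, f i (x j) = if i = j then 1 else 0)
    (hK : ∀ n, ‖basisProj x f n‖ ≤ K) (φ : NormedDual (dualSpan f)) :
    limsup (tailNorm (dualCoord f) φ) atTop ≤ ca (dualExpansion x f φ) := by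
  have hbdd (n : ℕ) : ‖dualExpansion x f φ n‖ ≤ 2 * K * tailNorm (dualCoord f) φ 0 := by
    simpa only [dualExpansion_zero, sub_zero] using
      norm_dualExpansion_sub_le hK φ le_rfl (Nat.zero_le n)
  refine le_ca_of_forall hbdd fun n C hC => ?_
  have hlimsup := limsup_tailNorm_le (dualCoord f) φ n
  have htail := tailNorm_le_of_norm_dualExpansion_sub_le hbi φ hC
  exact hlimsup.trans htail

lemma ca_dualExpansion_le_two_mul (hK : ∀ n, ‖basisProj x f n‖ ≤ K)
    {φ : NormedDual (dualSpan f)} (hφ : ‖φ‖ ≤ 1) : ca (dualExpansion x f φ) ≤ 2 * K := by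
  have hK0 : 0 ≤ 2 * K := by linarith [(norm_nonneg _).trans (hK 0)]
  have hlimsup : limsup (tailNorm (dualCoord f) φ) atTop ≤ 1 :=
    (limsup_tailNorm_le (dualCoord f) φ 0).trans ((tailNorm_le_norm (dualCoord f) φ 0).trans hφ)
  calc ca (dualExpansion x f φ)
      ≤ 2 * K * limsup (tailNorm (dualCoord f) φ) atTop := ca_dualExpansion_le hK φ
    _ ≤ 2 * K := mul_le_of_le_one_right hK0 hlimsup

lemma ca_dualExpansion_le_bc2 (hK : ∀ n, ‖basisProj x f n‖ ≤ K)
    {φ : NormedDual (dualSpan f)} (hφ : ‖φ‖ ≤ 1) : ca (dualExpansion x f φ) ≤ bc2 x f := by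
  refine le_csSup ⟨2 * K, ?_⟩ ⟨φ, hφ, rfl⟩
  rintro _ ⟨ψ, hψ, rfl⟩
  exact ca_dualExpansion_le_two_mul hK hψ

lemma bc2_le {c : ℝ}
    (h : ∀ φ : NormedDual (dualSpan f), ‖φ‖ ≤ 1 → ca (dualExpansion x f φ) ≤ c) :
    bc2 x f ≤ c := by
  refine csSup_le ⟨_, 0, by simp, rfl⟩ ?_
  rintro _ ⟨φ, hφ, rfl⟩
  exact h φ hφ

end Bc2

/-- Theorem 4.5: `sh((x*ₙ)) ≤ bc₂((xₙ)) ≤ 2K²·sh((x*ₙ))`, where the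
basic sequence `(x*ₙ)` is regarded as a sequence in its closed linear span `V`. -/
theorem sh_dual_le_bc2_le {X : Type*} [NormedAddCommGroup X] [NormedSpace ℝ X]
    [CompleteSpace X] (hinf : ¬ FiniteDimensional ℝ X)
    (x : ℕ → X) (f : ℕ → X →L[ℝ] ℝ) (hb : IsSchauderBasis x f)
    (K : ℝ) (hK : K = ⨆ n : ℕ, ‖basisProj x f n‖) :
    sh (fun i => (⟨f i, mem_dualSpan f i⟩ : ↥(dualSpan f))) ≤ bc2 x f ∧
    bc2 x f ≤ 2 * K ^ 2 * sh (fun i => (⟨f i, mem_dualSpan f i⟩ : ↥(dualSpan f))) := by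
  have hKP : ∀ n, ‖basisProj x f n‖ ≤ K := fun n => hK ▸ le_ciSup hb.bddAbove_norm_basisProj n
  have : Nontrivial X := not_subsingleton_iff_nontrivial.mp fun _ => hinf inferInstance
  have hK1 : 1 ≤ K := hb.one_le_of_norm_basisProj_le hKP
  refine ⟨sh_le _ fun φ hφ => (limsup_tailNorm_le_ca hb.apply_basis hKP φ).trans
    (ca_dualExpansion_le_bc2 hKP hφ), bc2_le fun φ hφ => ?_⟩
  have hL := limsup_tailNorm_nonneg (dualCoord f) φ
  calc ca (dualExpansion x f φ)
      ≤ 2 * K * limsup (tailNorm (dualCoord f) φ) atTop := ca_dualExpansion_le hKP φ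
    _ ≤ 2 * K ^ 2 * limsup (tailNorm (dualCoord f) φ) atTop :=
        mul_le_mul_of_nonneg_right (by nlinarith) hL
    _ ≤ 2 * K ^ 2 * sh (dualCoord f) :=
        mul_le_mul_of_nonneg_left (limsup_tailNorm_le_sh _ φ hφ) (by positivity)
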